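/- Let U = SC and U₀ = SC₀ be the evolution operators of the position-dependent and position-independent quantum walks on ℤ, respectively, where the coin family {C(x)} satisfies ‖C(x) − C₀‖ ≤ c₁|x|^{−1−ε} for all x ∈ ℤ∖{0} with constants c₁, ε > 0. Then U − U₀ is a trace class operator on ℓ²(ℤ; ℂ²). -/

import Mathlib

noncomputable section
open MeasureTheory Filter Topology Complex

/-- The Hilbert space `ℓ²(ℤ; ℂ²)` of the quantum walk. -/
abbrev QWH := lp (fun _ : ℤ => EuclideanSpace ℂ (Fin 2)) 2

/-- `U = SC` is the quantum-walk evolution with coin family `Ccoin`: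
`(UΨ)(x) = P(x+1)Ψ(x+1) + Q(x-1)Ψ(x-1)`, i.e. the upper component of `UΨ` at `x`
is the upper component of `C(x+1)Ψ(x+1)` and the lower one is the lower component
of `C(x-1)Ψ(x-1)`. -/
def IsQWEvolution (Ccoin : ℤ → Matrix (Fin 2) (Fin 2) ℂ) (U : QWH →L[ℂ] QWH) : Prop :=
  ∀ Ψ : QWH, ∀ x : ℤ,
    (U Ψ) x 0 = Matrix.mulVec (Ccoin (x + 1)) (Ψ (x + 1)) 0 ∧
    (U Ψ) x 1 = Matrix.mulVec (Ccoin (x - 1)) (Ψ (x - 1)) 1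

/-- A bounded operator on a Hilbert space is trace class iff it admits a nuclear
representation `T = ∑ₙ |aₙ⟩⟨bₙ|` with `∑ₙ ‖aₙ‖‖bₙ‖ < ∞` (in a Hilbert space this is
equivalent to `Tr |T| < ∞`). -/
def IsTraceClass {E : Type*} [NormedAddCommGroup E] [InnerProductSpace ℂ E]
    (T : E →L[ℂ] E) : Prop :=
  ∃ a b : ℕ → E, Summable (fun n => ‖a n‖ * ‖b n‖) ∧
    ∀ ψ, T ψ = ∑' n, (inner ℂ (b n) ψ : ℂ) • a n

/-- Assumption (A.1): `‖C(x) − C₀‖ ≤ c₁|x|^{−1−ε}` for `x ≠ 0`, where `‖·‖` is the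
operator norm of a `2×2` matrix acting on `ℂ²`. -/
def AssumpA1 (Ccoin : ℤ → Matrix (Fin 2) (Fin 2) ℂ) (C0 : Matrix (Fin 2) (Fin 2) ℂ) : Prop :=
  ∃ c₁ ε : ℝ, 0 < c₁ ∧ 0 < ε ∧ ∀ x : ℤ, x ≠ 0 →
    ‖Matrix.toEuclideanCLM (𝕜 := ℂ) (Ccoin x - C0)‖ ≤ c₁ * ((|x| : ℤ) : ℝ) ^ (-(1 + ε))

/-!
With `Δ(x) = C(x) - C₀`, the operator `U - U₀` is again a walk operator, with coin family `Δ`,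
so it maps the basis vector `δₓ ⊗ eⱼ` to `Δ(x)₀ⱼ δₓ₋₁ ⊗ e₀ + Δ(x)₁ⱼ δₓ₊₁ ⊗ e₁`, of norm at most
`2‖Δ(x)‖`. By (A.1) these norms are summable, and any operator `T` with `∑ᵢ ‖T eᵢ‖ < ∞` over a
countable Hilbert basis is trace class, through the nuclear representation `T = ∑ᵢ |T eᵢ⟩⟨eᵢ|`.
-/

open scoped InnerProductSpace

section TraceClass

variable {E : Type*} [NormedAddCommGroup E] [InnerProductSpace ℂ E]

theorem isTraceClass_of_eq_tsum {ι : Type*} [Countable ι] (T : E →L[ℂ] E) (a b : ι → E)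
    (hab : Summable fun i => ‖a i‖ * ‖b i‖) (hT : ∀ ψ, T ψ = ∑' i, ⟪b i, ψ⟫_ℂ • a i) :
    IsTraceClass T := by
  obtain ⟨f, hf⟩ := Countable.exists_injective_nat ι
  have extend_eq_zero : ∀ n ∉ Set.range f, Function.extend f a 0 n = 0 ∧
      Function.extend f b 0 n = 0 := fun n hn =>
    ⟨Function.extend_apply' _ _ _ hn, Function.extend_apply' _ _ _ hn⟩
  refine ⟨Function.extend f a 0, Function.extend f b 0, ?_, fun ψ => ?_⟩
  · refine (hf.summable_iff fun n hn => by simp [(extend_eq_zero n hn).1]).mp ?_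
    simpa [Function.comp_def, hf.extend_apply] using hab
  · rw [hT, ← hf.tsum_eq fun n hn => ?_]
    · simp [hf.extend_apply]
    · by_contra hn'
      exact hn (by simp [(extend_eq_zero n hn').2])

theorem isTraceClass_of_summable_norm_apply {ι : Type*} [Countable ι] (e : HilbertBasis ι ℂ E)
    (T : E →L[ℂ] E) (hT : Summable fun i => ‖T (e i)‖) : IsTraceClass T := by
  refine isTraceClass_of_eq_tsum T (fun i => T (e i)) e (by simpa [e.orthonormal.1] using hT)
    fun ψ => ?_
  have hψ := (e.hasSum_repr ψ).mapL T
  simpa [e.repr_apply_apply] using hψ.tsum_eq.symm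

end TraceClass

section StdBasis

variable (𝕜 : Type*) [RCLike 𝕜] (ι n : Type*) [DecidableEq ι] [Fintype n] [DecidableEq n]

def lpSingleBasisVec (p : ι × n) : lp (fun _ : ι => EuclideanSpace 𝕜 n) 2 :=
  lp.single 2 p.1 (EuclideanSpace.single p.2 1)

variable {𝕜 ι n}

theorem lpSingleBasisVec_apply (p : ι × n) (x : ι) (i : n) :
    lpSingleBasisVec 𝕜 ι n p x i = if p = (x, i) then 1 else 0 := by
  simp only [lpSingleBasisVec, lp.single_apply, Pi.single_apply, Prod.ext_iff, eq_comm, ite_and]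
  split_ifs <;> simp_all

theorem inner_lpSingleBasisVec_left (x : ι) (i : n) (ψ : lp (fun _ : ι => EuclideanSpace 𝕜 n) 2) :
    ⟪lpSingleBasisVec 𝕜 ι n (x, i), ψ⟫_𝕜 = ψ x i := by
  simp [lpSingleBasisVec, lp.inner_single_left, EuclideanSpace.inner_single_left]

variable (𝕜 ι n)

def lpHilbertBasis : HilbertBasis (ι × n) 𝕜 (lp (fun _ : ι => EuclideanSpace 𝕜 n) 2) :=
  HilbertBasis.mkOfOrthogonalEqBot (v := lpSingleBasisVec 𝕜 ι n)
    (orthonormal_iff_ite.mpr fun ⟨x, i⟩ q => by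
      simp [inner_lpSingleBasisVec_left, lpSingleBasisVec_apply, eq_comm])
    (by
      refine (Submodule.eq_bot_iff _).mpr fun ψ hψ => lp.ext (funext fun x => PiLp.ext fun i => ?_)
      rw [← inner_lpSingleBasisVec_left]
      exact Submodule.inner_right_of_mem_orthogonal
        (Submodule.subset_span (Set.mem_range_self (x, i))) hψ)

@[simp]
theorem lpHilbertBasis_apply (p : ι × n) : lpHilbertBasis 𝕜 ι n p = lpSingleBasisVec 𝕜 ι n p :=
  congrFun (HilbertBasis.coe_mkOfOrthogonalEqBot _ _) p

theorem norm_lpSingleBasisVec (p : ι × n) : ‖lpSingleBasisVec 𝕜 ι n p‖ = 1 := by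
  simpa using (lpHilbertBasis 𝕜 ι n).orthonormal.1 p

end StdBasis

theorem Matrix.norm_apply_le_norm_toEuclideanCLM {𝕜 n : Type*} [RCLike 𝕜] [Fintype n]
    [DecidableEq n] (M : Matrix n n 𝕜) (i j : n) :
    ‖M i j‖ ≤ ‖Matrix.toEuclideanCLM (𝕜 := 𝕜) M‖ := by
  have hcol : Matrix.toEuclideanCLM (𝕜 := 𝕜) M (EuclideanSpace.single j 1) i = M i j := by
    simp [Matrix.ofLp_toEuclideanCLM, Matrix.mulVec_single]
  calc ‖M i j‖ = ‖Matrix.toEuclideanCLM (𝕜 := 𝕜) M (EuclideanSpace.single j 1) i‖ := by rw [hcol]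
    _ ≤ ‖Matrix.toEuclideanCLM (𝕜 := 𝕜) M (EuclideanSpace.single j 1)‖ := PiLp.norm_apply_le _ _
    _ ≤ ‖Matrix.toEuclideanCLM (𝕜 := 𝕜) M‖ := by
      simpa using (Matrix.toEuclideanCLM (𝕜 := 𝕜) M).le_opNorm (EuclideanSpace.single j 1)

theorem AssumpA1.summable_norm_sub {C : ℤ → Matrix (Fin 2) (Fin 2) ℂ}
    {C0 : Matrix (Fin 2) (Fin 2) ℂ} (h : AssumpA1 C C0) :
    Summable fun x => ‖Matrix.toEuclideanCLM (𝕜 := ℂ) (C x - C0)‖ := by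
  obtain ⟨c₁, ε, -, hε, hbound⟩ := h
  refine Summable.of_norm_bounded_eventually
    ((Real.summable_abs_int_rpow (b := 1 + ε) (by linarith)).mul_left c₁) ?_
  refine (Set.finite_singleton (0 : ℤ)).subset fun x hx => by_contra fun hx0 => hx ?_
  simpa using hbound x hx0

namespace IsQWEvolution

variable {C C' : ℤ → Matrix (Fin 2) (Fin 2) ℂ} {U U' : QWH →L[ℂ] QWH}

theorem sub (hU : IsQWEvolution C U) (hU' : IsQWEvolution C' U') :
    IsQWEvolution (C - C') (U - U') := fun Ψ x => by
  simp [Matrix.sub_mulVec, hU Ψ x, hU' Ψ x]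

local notation "e" => lpSingleBasisVec ℂ ℤ (Fin 2)

theorem apply_lpSingleBasisVec (hU : IsQWEvolution C U) (x : ℤ) (j : Fin 2) :
    U (e (x, j)) = C x 0 j • e (x - 1, 0) + C x 1 j • e (x + 1, 1) := by
  refine lp.ext (funext fun y => PiLp.ext (Fin.forall_fin_two.mpr ⟨?_, ?_⟩)) <;>
    rw [← inner_lpSingleBasisVec_left y _ (_ + _), inner_add_right, inner_smul_right,
      inner_smul_right, inner_lpSingleBasisVec_left, inner_lpSingleBasisVec_left]
  · rw [(hU _ y).1]
    rcases eq_or_ne x (y + 1) with rfl | hy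
    · fin_cases j <;> simp [Matrix.mulVec, dotProduct, lpSingleBasisVec_apply]
    · simp [Matrix.mulVec, dotProduct, lpSingleBasisVec_apply, hy, show x - 1 ≠ y by omega]
  · rw [(hU _ y).2]
    rcases eq_or_ne x (y - 1) with rfl | hy
    · fin_cases j <;> simp [Matrix.mulVec, dotProduct, lpSingleBasisVec_apply]
    · simp [Matrix.mulVec, dotProduct, lpSingleBasisVec_apply, hy, show x + 1 ≠ y by omega]

theorem norm_apply_lpSingleBasisVec_le (hU : IsQWEvolution C U) (x : ℤ) (j : Fin 2) :
    ‖U (e (x, j))‖ ≤ 2 * ‖Matrix.toEuclideanCLM (𝕜 := ℂ) (C x)‖ := by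
  rw [hU.apply_lpSingleBasisVec]
  calc _ ≤ ‖C x 0 j‖ + ‖C x 1 j‖ := by
        simpa [norm_smul, norm_lpSingleBasisVec] using
          norm_add_le (C x 0 j • e (x - 1, 0)) (C x 1 j • e (x + 1, 1))
    _ ≤ _ := by
      linarith [(C x).norm_apply_le_norm_toEuclideanCLM 0 j,
        (C x).norm_apply_le_norm_toEuclideanCLM 1 j]

theorem summable_norm_apply_lpHilbertBasis (hU : IsQWEvolution C U)
    (hC : Summable fun x => ‖Matrix.toEuclideanCLM (𝕜 := ℂ) (C x)‖) :
    Summable fun p => ‖U (lpHilbertBasis ℂ ℤ (Fin 2) p)‖ := by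
  have hC2 : Summable fun p : ℤ × Fin 2 => 2 * ‖Matrix.toEuclideanCLM (𝕜 := ℂ) (C p.1)‖ :=
    (summable_prod_of_nonneg fun _ => by positivity).mpr
      ⟨fun _ => Summable.of_finite, by simpa using (hC.mul_left 2).mul_left 2⟩
  exact hC2.of_nonneg_of_le (fun _ => norm_nonneg _) fun ⟨x, j⟩ => by
    simpa using hU.norm_apply_lpSingleBasisVec_le x j

end IsQWEvolution

theorem qw_diff_isTraceClass_general
    (Ccoin : ℤ → Matrix (Fin 2) (Fin 2) ℂ) (C0 : Matrix (Fin 2) (Fin 2) ℂ)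
    (hA1 : AssumpA1 Ccoin C0)
    (U U0 : unitary (QWH →L[ℂ] QWH))
    (hU : IsQWEvolution Ccoin (U : QWH →L[ℂ] QWH))
    (hU0 : IsQWEvolution (fun _ => C0) (U0 : QWH →L[ℂ] QWH)) :
    IsTraceClass ((U : QWH →L[ℂ] QWH) - (U0 : QWH →L[ℂ] QWH)) :=
  isTraceClass_of_summable_norm_apply (lpHilbertBasis ℂ ℤ (Fin 2)) _
    ((hU.sub hU0).summable_norm_apply_lpHilbertBasis hA1.summable_norm_sub)

/-- Lemma 2.1: under assumption (A.1), the difference `U − U₀` of the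
position-dependent and position-independent quantum walk evolutions is trace class. -/
theorem qw_diff_isTraceClass
    (Ccoin : ℤ → Matrix (Fin 2) (Fin 2) ℂ) (C0 : Matrix (Fin 2) (Fin 2) ℂ)
    (hcoin : ∀ x : ℤ, Ccoin x ∈ Matrix.unitaryGroup (Fin 2) ℂ)
    (hC0 : C0 ∈ Matrix.unitaryGroup (Fin 2) ℂ)
    (hA1 : AssumpA1 Ccoin C0)
    (U U0 : unitary (QWH →L[ℂ] QWH))
    (hU : IsQWEvolution Ccoin (U : QWH →L[ℂ] QWH))
    (hU0 : IsQWEvolution (fun _ => C0) (U0 : QWH →L[ℂ] QWH)) :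
    IsTraceClass ((U : QWH →L[ℂ] QWH) - (U0 : QWH →L[ℂ] QWH)) :=
  qw_diff_isTraceClass_general Ccoin C0 hA1 U U0 hU hU0
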